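/- (Antiadmissibility of the introduction rules.) Let C be the calculus consisting of the common structural rules, Cut, and all elimination rules, and let C' be C extended by all introduction rules (including the axioms ∅▷⊤ and ⊥▷∅). Then for every set S of sequents, the empty sequent ∅▷∅ is derivable from S in C' if and only if it is derivable from S in C. -/
import Mathlib


/-- Propositional formulas: atoms, conjunction, disjunction, De Morgan negation, ⊤, ⊥. -/
inductive Fm : Type where
  | atom : ℕ → Fm
  | conj : Fm → Fm → Fm
  | disj : Fm → Fm → Fm
  | neg  : Fm → Fm
  | top  : Fm
  | bot  : Fm
deriving DecidableEq

/-- A sequent is a pair of finite multisets of formulas. -/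
abbrev Sqnt : Type := Multiset Fm × Multiset Fm

/-- A formula is an atom. -/
def isAtom (φ : Fm) : Prop := ∃ i, φ = Fm.atom i

/-- A sequent is atomic if every formula in it is an atom. -/
def AtomicSeq (s : Sqnt) : Prop := (∀ φ ∈ s.1, isAtom φ) ∧ (∀ φ ∈ s.2, isAtom φ)

/-- Derivability of a sequent from a set `S` of sequents in a super-Belnap calculus.
The calculus always contains the common structural rules of Weakening and Contraction.
The `Prop` flags switch further rules on and off:
`i` = the introduction rules (incl. the axioms `∅▷⊤` and `⊥▷∅`),
`e` = the elimination rules, `d` = Identity, `c` = Cut, `l` = Limited Cut. -/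
inductive Drv (i e d c l : Prop) (S : Set Sqnt) : Sqnt → Prop where
  | prem {s} : s ∈ S → Drv i e d c l S s
  -- common structural rules: Weakening and Contraction
  | wkL (φ : Fm) {Γ Δ} : Drv i e d c l S (Γ, Δ) → Drv i e d c l S (φ ::ₘ Γ, Δ)
  | wkR (φ : Fm) {Γ Δ} : Drv i e d c l S (Γ, Δ) → Drv i e d c l S (Γ, φ ::ₘ Δ)
  | ctrL {φ Γ Δ} : Drv i e d c l S (φ ::ₘ φ ::ₘ Γ, Δ) → Drv i e d c l S (φ ::ₘ Γ, Δ)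
  | ctrR {φ Γ Δ} : Drv i e d c l S (Γ, φ ::ₘ φ ::ₘ Δ) → Drv i e d c l S (Γ, φ ::ₘ Δ)
  -- introduction rules
  | andR {φ ψ Γ Δ} : i → Drv i e d c l S (Γ, φ ::ₘ Δ) → Drv i e d c l S (Γ, ψ ::ₘ Δ) →
      Drv i e d c l S (Γ, Fm.conj φ ψ ::ₘ Δ)
  | andL {φ ψ Γ Δ} : i → Drv i e d c l S (φ ::ₘ ψ ::ₘ Γ, Δ) →
      Drv i e d c l S (Fm.conj φ ψ ::ₘ Γ, Δ)
  | orL {φ ψ Γ Δ} : i → Drv i e d c l S (φ ::ₘ Γ, Δ) → Drv i e d c l S (ψ ::ₘ Γ, Δ) →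
      Drv i e d c l S (Fm.disj φ ψ ::ₘ Γ, Δ)
  | orR {φ ψ Γ Δ} : i → Drv i e d c l S (Γ, φ ::ₘ ψ ::ₘ Δ) →
      Drv i e d c l S (Γ, Fm.disj φ ψ ::ₘ Δ)
  | negR {φ Γ Δ} : i → Drv i e d c l S (φ ::ₘ Γ, Δ) → Drv i e d c l S (Γ, Fm.neg φ ::ₘ Δ)
  | negL {φ Γ Δ} : i → Drv i e d c l S (Γ, φ ::ₘ Δ) → Drv i e d c l S (Fm.neg φ ::ₘ Γ, Δ)
  | topR : i → Drv i e d c l S (0, {Fm.top})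
  | botL : i → Drv i e d c l S ({Fm.bot}, 0)
  -- elimination rules
  | andRE1 {φ ψ Γ Δ} : e → Drv i e d c l S (Γ, Fm.conj φ ψ ::ₘ Δ) → Drv i e d c l S (Γ, φ ::ₘ Δ)
  | andRE2 {φ ψ Γ Δ} : e → Drv i e d c l S (Γ, Fm.conj φ ψ ::ₘ Δ) → Drv i e d c l S (Γ, ψ ::ₘ Δ)
  | andLE {φ ψ Γ Δ} : e → Drv i e d c l S (Fm.conj φ ψ ::ₘ Γ, Δ) →
      Drv i e d c l S (φ ::ₘ ψ ::ₘ Γ, Δ)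
  | orLE1 {φ ψ Γ Δ} : e → Drv i e d c l S (Fm.disj φ ψ ::ₘ Γ, Δ) → Drv i e d c l S (φ ::ₘ Γ, Δ)
  | orLE2 {φ ψ Γ Δ} : e → Drv i e d c l S (Fm.disj φ ψ ::ₘ Γ, Δ) → Drv i e d c l S (ψ ::ₘ Γ, Δ)
  | orRE {φ ψ Γ Δ} : e → Drv i e d c l S (Γ, Fm.disj φ ψ ::ₘ Δ) →
      Drv i e d c l S (Γ, φ ::ₘ ψ ::ₘ Δ)
  | negRE {φ Γ Δ} : e → Drv i e d c l S (Γ, Fm.neg φ ::ₘ Δ) → Drv i e d c l S (φ ::ₘ Γ, Δ)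
  | negLE {φ Γ Δ} : e → Drv i e d c l S (Fm.neg φ ::ₘ Γ, Δ) → Drv i e d c l S (Γ, φ ::ₘ Δ)
  | topLE {Γ Δ} : e → Drv i e d c l S (Fm.top ::ₘ Γ, Δ) → Drv i e d c l S (Γ, Δ)
  | botRE {Γ Δ} : e → Drv i e d c l S (Γ, Fm.bot ::ₘ Δ) → Drv i e d c l S (Γ, Δ)
  -- Identity
  | ident (φ : Fm) : d → Drv i e d c l S ({φ}, {φ})
  -- Cut
  | cut {φ Γ Γ' Δ Δ'} : c → Drv i e d c l S (Γ, φ ::ₘ Δ) → Drv i e d c l S (φ ::ₘ Γ', Δ') →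
      Drv i e d c l S (Γ + Γ', Δ + Δ')
  -- Limited Cut
  | lcut1 {φ Γ Δ} : l → Drv i e d c l S (0, {φ}) → Drv i e d c l S (φ ::ₘ Γ, Δ) →
      Drv i e d c l S (Γ, Δ)
  | lcut2 {φ Γ Δ} : l → Drv i e d c l S (Γ, φ ::ₘ Δ) → Drv i e d c l S ({φ}, 0) →
      Drv i e d c l S (Γ, Δ)

section Anti

variable {S : Set Sqnt}

/-- The calculus `C`: structural rules, elimination rules, Cut. -/
abbrev DC (S : Set Sqnt) : Sqnt → Prop := Drv False True False True False S

/-- Componentwise sum of sequents. -/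
def sadd (a b : Sqnt) : Sqnt := (a.1 + b.1, a.2 + b.2)

lemma sadd_fst (a b : Sqnt) : (sadd a b).1 = a.1 + b.1 := rfl
lemma sadd_snd (a b : Sqnt) : (sadd a b).2 = a.2 + b.2 := rfl

/-- Full decompositions of a single formula placed on the right (`true`) or left (`false`). -/
def RL : Fm → Bool → Set Sqnt
  | .atom n, true => {((0 : Multiset Fm), ({Fm.atom n} : Multiset Fm))}
  | .atom n, false => {(({Fm.atom n} : Multiset Fm), (0 : Multiset Fm))}
  | .conj φ ψ, true => RL φ true ∪ RL ψ true
  | .conj φ ψ, false => {s | ∃ a ∈ RL φ false, ∃ b ∈ RL ψ false, s = sadd a b}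
  | .disj φ ψ, true => {s | ∃ a ∈ RL φ true, ∃ b ∈ RL ψ true, s = sadd a b}
  | .disj φ ψ, false => RL φ false ∪ RL ψ false
  | .neg φ, b => RL φ (!b)
  | .top, true => {((0 : Multiset Fm), ({Fm.top} : Multiset Fm))}
  | .top, false => {((0 : Multiset Fm), (0 : Multiset Fm))}
  | .bot, true => {((0 : Multiset Fm), (0 : Multiset Fm))}
  | .bot, false => {(({Fm.bot} : Multiset Fm), (0 : Multiset Fm))}

/-- One decomposition step for a multiset. -/
def dop (b : Bool) (φ : Fm) (A : Set Sqnt) : Set Sqnt :=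
  {s | ∃ l ∈ RL φ b, ∃ d ∈ A, s = sadd l d}

lemma sadd_left_comm (a b c : Sqnt) : sadd a (sadd b c) = sadd b (sadd a c) := by
  simp [sadd, Prod.ext_iff]; constructor <;> abel

lemma sadd_assoc (a b c : Sqnt) : sadd (sadd a b) c = sadd a (sadd b c) := by
  simp [sadd, Prod.ext_iff]; constructor <;> abel

instance (b : Bool) : LeftCommutative (dop b) := ⟨by
  intro φ ψ A
  ext s
  constructor <;> rintro ⟨l, hl, _, ⟨m, hm, d, hd, rfl⟩, rfl⟩ <;>
    exact ⟨m, hm, _, ⟨l, hl, d, hd, rfl⟩, sadd_left_comm _ _ _⟩⟩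

/-- Full decompositions of a multiset on side `b`. -/
def MDec (b : Bool) (Γ : Multiset Fm) : Set Sqnt :=
  Multiset.foldr (dop b) {((0 : Multiset Fm), (0 : Multiset Fm))} Γ

lemma MDec_zero (b : Bool) : MDec b 0 = {((0 : Multiset Fm), (0 : Multiset Fm))} := rfl

lemma MDec_cons (b : Bool) (φ : Fm) (Γ : Multiset Fm) :
    MDec b (φ ::ₘ Γ) = dop b φ (MDec b Γ) := Multiset.foldr_cons _ _ _ _

lemma Drv.recast {i e d c l : Prop} {S : Set Sqnt} {Γ Δ Γ' Δ' : Multiset Fm}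
    (h : Drv i e d c l S (Γ, Δ)) (h1 : Γ = Γ') (h2 : Δ = Δ') :
    Drv i e d c l S (Γ', Δ') := by subst h1; subst h2; exact h

lemma wkLm {i e d c l : Prop} {S : Set Sqnt} (Γ₀ : Multiset Fm) {Γ Δ : Multiset Fm}
    (h : Drv i e d c l S (Γ, Δ)) : Drv i e d c l S (Γ₀ + Γ, Δ) := by
  induction Γ₀ using Multiset.induction_on with
  | empty => simpa using h
  | cons φ Γ₀ ih => simpa [Multiset.cons_add] using Drv.wkL φ ih

lemma wkRm {i e d c l : Prop} {S : Set Sqnt} (Δ₀ : Multiset Fm) {Γ Δ : Multiset Fm}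
    (h : Drv i e d c l S (Γ, Δ)) : Drv i e d c l S (Γ, Δ₀ + Δ) := by
  induction Δ₀ using Multiset.induction_on with
  | empty => simpa using h
  | cons φ Δ₀ ih => simpa [Multiset.cons_add] using Drv.wkR φ ih

lemma ctrLm {i e d c l : Prop} {S : Set Sqnt} (X : Multiset Fm) {Γ Δ : Multiset Fm}
    (h : Drv i e d c l S (X + X + Γ, Δ)) : Drv i e d c l S (X + Γ, Δ) := by
  induction X using Multiset.induction_on generalizing Γ with
  | empty => simpa using h
  | cons φ X ih =>
    have h1 : Drv i e d c l S (φ ::ₘ φ ::ₘ (X + X + Γ), Δ) :=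
      h.recast (by simp only [← Multiset.singleton_add]; abel) rfl
    have h2 := (Drv.ctrL h1).recast
      (show φ ::ₘ (X + X + Γ) = X + X + (φ ::ₘ Γ) by
        simp only [← Multiset.singleton_add]; abel) rfl
    exact (ih h2).recast (by simp only [← Multiset.singleton_add]; abel) rfl

lemma ctrRm {i e d c l : Prop} {S : Set Sqnt} (U : Multiset Fm) {Γ Δ : Multiset Fm}
    (h : Drv i e d c l S (Γ, U + U + Δ)) : Drv i e d c l S (Γ, U + Δ) := by
  induction U using Multiset.induction_on generalizing Δ with
  | empty => simpa using h
  | cons φ U ih =>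
    have h1 : Drv i e d c l S (Γ, φ ::ₘ φ ::ₘ (U + U + Δ)) :=
      h.recast rfl (by simp only [← Multiset.singleton_add]; abel)
    have h2 := (Drv.ctrR h1).recast rfl
      (show φ ::ₘ (U + U + Δ) = U + U + (φ ::ₘ Δ) by
        simp only [← Multiset.singleton_add]; abel)
    exact (ih h2).recast rfl (by simp only [← Multiset.singleton_add]; abel)

/-- Derivable in `C`, or trivially valid (⊥ on the left or ⊤ on the right). -/
def DD (S : Set Sqnt) (s : Sqnt) : Prop :=
  DC S s ∨ Fm.bot ∈ s.1 ∨ Fm.top ∈ s.2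

lemma DD.recast {S : Set Sqnt} {Γ Δ Γ' Δ' : Multiset Fm}
    (h : DD S (Γ, Δ)) (h1 : Γ = Γ') (h2 : Δ = Δ') : DD S (Γ', Δ') := by
  subst h1; subst h2; exact h

lemma DD_wk (Γ₀ Δ₀ : Multiset Fm) {Γ Δ : Multiset Fm} (h : DD S (Γ, Δ)) :
    DD S (Γ₀ + Γ, Δ₀ + Δ) := by
  rcases h with h | h | h
  · exact Or.inl (wkLm Γ₀ (wkRm Δ₀ h))
  · exact Or.inr (Or.inl (by simp [h]))
  · exact Or.inr (Or.inr (by simp [h]))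

lemma DD_ctr {X U Γ Δ : Multiset Fm} (h : DD S (X + X + Γ, U + U + Δ)) :
    DD S (X + Γ, U + Δ) := by
  rcases h with h | h | h
  · exact Or.inl (ctrLm X (ctrRm U h))
  · refine Or.inr (Or.inl ?_)
    simp only [Multiset.mem_add] at h ⊢; tauto
  · refine Or.inr (Or.inr ?_)
    simp only [Multiset.mem_add] at h ⊢; tauto

end Anti

section Anti2
variable {S : Set Sqnt}

lemma RL_neg (φ : Fm) (b : Bool) : RL (.neg φ) b = RL φ (!b) := by
  cases b <;> rfl

/-- Elimination rules implement single-formula decomposition. -/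
lemma elimRL (φ : Fm) :
    (∀ Γ Δ, DC S (Γ, φ ::ₘ Δ) → ∀ r ∈ RL φ true, DC S (Γ + r.1, Δ + r.2)) ∧
    (∀ Γ Δ, DC S (φ ::ₘ Γ, Δ) → ∀ l ∈ RL φ false, DC S (Γ + l.1, Δ + l.2)) := by
  induction φ with
  | atom n =>
    constructor
    · rintro Γ Δ h r rfl
      exact h.recast (by simp) (by simp only [← Multiset.singleton_add]; abel)
    · rintro Γ Δ h l rfl
      exact h.recast (by simp only [← Multiset.singleton_add]; abel) (by simp)
  | conj φ ψ ihφ ihψ =>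
    constructor
    · rintro Γ Δ h r (hr | hr)
      · exact ihφ.1 Γ Δ (Drv.andRE1 trivial h) r hr
      · exact ihψ.1 Γ Δ (Drv.andRE2 trivial h) r hr
    · rintro Γ Δ h _ ⟨l1, hl1, l2, hl2, rfl⟩
      have h1 := ihφ.2 (ψ ::ₘ Γ) Δ (Drv.andLE trivial h) l1 hl1
      have h2 := ihψ.2 (Γ + l1.1) (Δ + l1.2)
        (h1.recast (by simp only [← Multiset.singleton_add]; abel) rfl) l2 hl2
      exact h2.recast (by simp [sadd]; abel) (by simp [sadd]; abel)
  | disj φ ψ ihφ ihψ =>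
    constructor
    · rintro Γ Δ h _ ⟨r1, hr1, r2, hr2, rfl⟩
      have h1 := ihφ.1 Γ (ψ ::ₘ Δ) (Drv.orRE trivial h) r1 hr1
      have h2 := ihψ.1 (Γ + r1.1) (Δ + r1.2)
        (h1.recast rfl (by simp only [← Multiset.singleton_add]; abel)) r2 hr2
      exact h2.recast (by simp [sadd]; abel) (by simp [sadd]; abel)
    · rintro Γ Δ h l (hl | hl)
      · exact ihφ.2 Γ Δ (Drv.orLE1 trivial h) l hl
      · exact ihψ.2 Γ Δ (Drv.orLE2 trivial h) l hl
  | neg φ ihφ =>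
    constructor
    · intro Γ Δ h r hr
      rw [RL_neg] at hr
      exact ihφ.2 Γ Δ (Drv.negRE trivial h) r hr
    · intro Γ Δ h l hl
      rw [RL_neg] at hl
      exact ihφ.1 Γ Δ (Drv.negLE trivial h) l hl
  | top =>
    constructor
    · rintro Γ Δ h r rfl
      exact h.recast (by simp) (by simp only [← Multiset.singleton_add]; abel)
    · rintro Γ Δ h l rfl
      exact (Drv.topLE trivial h).recast (by simp) (by simp)
  | bot =>
    constructor
    · rintro Γ Δ h r rfl
      exact (Drv.botRE trivial h).recast (by simp) (by simp)
    · rintro Γ Δ h l rfl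
      exact h.recast (by simp only [← Multiset.singleton_add]; abel) (by simp)

lemma decL (Γ : Multiset Fm) : ∀ (Γ₀ Δ : Multiset Fm), DC S (Γ + Γ₀, Δ) →
    ∀ a ∈ MDec false Γ, DC S (a.1 + Γ₀, a.2 + Δ) := by
  induction Γ using Multiset.induction_on with
  | empty =>
    rintro Γ₀ Δ h a ha
    rw [MDec_zero] at ha
    rcases ha with rfl
    exact h.recast (by simp) (by simp)
  | cons φ Γ ih =>
    rintro Γ₀ Δ h a ha
    rw [MDec_cons] at ha
    obtain ⟨l, hl, d, hd, rfl⟩ := ha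
    have h1 : DC S (φ ::ₘ (Γ + Γ₀), Δ) :=
      h.recast (by simp only [← Multiset.singleton_add]; abel) rfl
    have h2 := (elimRL φ).2 (Γ + Γ₀) Δ h1 l hl
    have h3 : DC S (Γ + (l.1 + Γ₀), l.2 + Δ) :=
      h2.recast (by abel) (by abel)
    exact (ih (l.1 + Γ₀) (l.2 + Δ) h3 d hd).recast (by simp [sadd]; abel) (by simp [sadd]; abel)

lemma decR (Δ : Multiset Fm) : ∀ (Γ Δ₀ : Multiset Fm), DC S (Γ, Δ + Δ₀) →
    ∀ b ∈ MDec true Δ, DC S (Γ + b.1, b.2 + Δ₀) := by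
  induction Δ using Multiset.induction_on with
  | empty =>
    rintro Γ Δ₀ h b hb
    rw [MDec_zero] at hb
    rcases hb with rfl
    exact h.recast (by simp) (by simp)
  | cons φ Δ ih =>
    rintro Γ Δ₀ h b hb
    rw [MDec_cons] at hb
    obtain ⟨r, hr, d, hd, rfl⟩ := hb
    have h1 : DC S (Γ, φ ::ₘ (Δ + Δ₀)) :=
      h.recast rfl (by simp only [← Multiset.singleton_add]; abel)
    have h2 := (elimRL φ).1 Γ (Δ + Δ₀) h1 r hr
    have h3 : DC S (Γ + r.1, Δ + (Δ₀ + r.2)) := h2.recast rfl (by abel)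
    exact (ih (Γ + r.1) (Δ₀ + r.2) h3 d hd).recast (by simp [sadd]; abel) (by simp [sadd]; abel)

lemma premGood {Γ Δ : Multiset Fm} (h : DC S (Γ, Δ)) :
    ∀ a ∈ MDec false Γ, ∀ b ∈ MDec true Δ, DC S (a.1 + b.1, a.2 + b.2) := by
  intro a ha b hb
  have h1 := decL Γ 0 Δ (h.recast (by simp) rfl) a ha
  have h2 := decR Δ a.1 a.2 (h1.recast (by simp) (by abel)) b hb
  exact h2.recast rfl (by abel)

lemma MDec_add (b : Bool) (Γ : Multiset Fm) : ∀ (Γ' : Multiset Fm), ∀ a ∈ MDec b (Γ + Γ'),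
    ∃ a1 ∈ MDec b Γ, ∃ a2 ∈ MDec b Γ', a = sadd a1 a2 := by
  induction Γ using Multiset.induction_on with
  | empty =>
    intro Γ' a ha
    refine ⟨(0, 0), rfl, a, by simpa using ha, ?_⟩
    simp [sadd]
  | cons φ Γ ih =>
    intro Γ' a ha
    rw [show (φ ::ₘ Γ) + Γ' = φ ::ₘ (Γ + Γ') from Multiset.cons_add _ _ _, MDec_cons] at ha
    obtain ⟨l, hl, d, hd, rfl⟩ := ha
    obtain ⟨d1, hd1, d2, hd2, rfl⟩ := ih Γ' d hd
    have hm : sadd l d1 ∈ MDec b (φ ::ₘ Γ) := by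
      rw [MDec_cons]; exact ⟨l, hl, d1, hd1, rfl⟩
    exact ⟨sadd l d1, hm, d2, hd2, (sadd_assoc _ _ _).symm⟩

end Anti2

section Anti3
variable {S : Set Sqnt}

lemma DD_cut_atom (n : ℕ) {Γ Δ Γ' Δ' : Multiset Fm}
    (h1 : DD S (Γ, Fm.atom n ::ₘ Δ)) (h2 : DD S (Fm.atom n ::ₘ Γ', Δ')) :
    DD S (Γ + Γ', Δ + Δ') := by
  rcases h1 with h1 | h1 | h1
  · rcases h2 with h2 | h2 | h2
    · exact Or.inl (Drv.cut trivial h1 h2)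
    · rcases Multiset.mem_cons.mp h2 with h | h
      · exact absurd h (by simp)
      · exact Or.inr (Or.inl (by simp [h]))
    · exact Or.inr (Or.inr (by simp [h2]))
  · exact Or.inr (Or.inl (by simp [h1]))
  · rcases Multiset.mem_cons.mp h1 with h | h
    · exact absurd h (by simp)
    · exact Or.inr (Or.inr (by simp [h]))

lemma cutLem (φ : Fm) : ∀ Γ Δ Γ' Δ' : Multiset Fm,
    (∀ r ∈ RL φ true, DD S (Γ + r.1, Δ + r.2)) →
    (∀ l ∈ RL φ false, DD S (Γ' + l.1, Δ' + l.2)) →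
    DD S (Γ + Γ', Δ + Δ') := by
  induction φ with
  | atom n =>
    intro Γ Δ Γ' Δ' h1 h2
    have a1 : DD S (Γ, Fm.atom n ::ₘ Δ) :=
      (h1 _ rfl).recast (by simp) (by simp only [← Multiset.singleton_add]; abel)
    have a2 : DD S (Fm.atom n ::ₘ Γ', Δ') :=
      (h2 _ rfl).recast (by simp only [← Multiset.singleton_add]; abel) (by simp)
    exact DD_cut_atom n a1 a2
  | conj φ ψ ihφ ihψ =>
    intro Γ Δ Γ' Δ' h1 h2
    have key : ∀ l2 ∈ RL ψ false, DD S ((Γ + Γ') + l2.1, (Δ + Δ') + l2.2) := by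
      intro l2 hl2
      have := ihφ Γ Δ (Γ' + l2.1) (Δ' + l2.2)
        (fun r hr => h1 r (Or.inl hr))
        (fun l1 hl1 => (h2 (sadd l1 l2) ⟨l1, hl1, l2, hl2, rfl⟩).recast
          (by simp [sadd]; abel) (by simp [sadd]; abel))
      exact this.recast (by abel) (by abel)
    have h3 := ihψ Γ Δ (Γ + Γ') (Δ + Δ') (fun r hr => h1 r (Or.inr hr)) key
    have h4 : DD S (Γ + Γ + Γ', Δ + Δ + Δ') := h3.recast (by abel) (by abel)
    exact DD_ctr h4
  | disj φ ψ ihφ ihψ =>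
    intro Γ Δ Γ' Δ' h1 h2
    have key : ∀ r1 ∈ RL φ true, DD S ((Γ + Γ') + r1.1, (Δ + Δ') + r1.2) := by
      intro r1 hr1
      have := ihψ (Γ + r1.1) (Δ + r1.2) Γ' Δ'
        (fun r2 hr2 => (h1 (sadd r1 r2) ⟨r1, hr1, r2, hr2, rfl⟩).recast
          (by simp [sadd]; abel) (by simp [sadd]; abel))
        (fun l hl => h2 l (Or.inr hl))
      exact this.recast (by abel) (by abel)
    have h3 := ihφ (Γ + Γ') (Δ + Δ') Γ' Δ' key (fun l hl => h2 l (Or.inl hl))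
    have h4 : DD S (Γ' + Γ' + Γ, Δ' + Δ' + Δ) := h3.recast (by abel) (by abel)
    exact (DD_ctr h4).recast (by abel) (by abel)
  | neg φ ihφ =>
    intro Γ Δ Γ' Δ' h1 h2
    rw [RL_neg] at h1 h2
    exact (ihφ Γ' Δ' Γ Δ h2 h1).recast (by abel) (by abel)
  | top =>
    intro Γ Δ Γ' Δ' _ h2
    have h3 : DD S (Γ', Δ') := (h2 _ rfl).recast (by simp) (by simp)
    exact DD_wk Γ Δ h3
  | bot =>
    intro Γ Δ Γ' Δ' h1 _
    have h3 : DD S (Γ, Δ) := (h1 _ rfl).recast (by simp) (by simp)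
    exact (DD_wk Γ' Δ' h3).recast (by abel) (by abel)

end Anti3

section Anti4
variable {S : Set Sqnt}

lemma mainGood {s : Sqnt} (h : Drv True True False True False S s) :
    ∀ a ∈ MDec false s.1, ∀ b ∈ MDec true s.2, DD S (a.1 + b.1, a.2 + b.2) := by
  induction h with
  | @prem s hs =>
    intro a ha b hb
    exact Or.inl (premGood (Drv.prem hs) a ha b hb)
  | @wkL φ Γ Δ _ ih =>
    intro a ha b hb
    rw [MDec_cons] at ha
    obtain ⟨l, hl, d, hd, rfl⟩ := ha
    exact (DD_wk l.1 l.2 (ih d hd b hb)).recast (by simp [sadd]; abel) (by simp [sadd]; abel)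
  | @wkR φ Γ Δ _ ih =>
    intro a ha b hb
    rw [MDec_cons] at hb
    obtain ⟨r, hr, d, hd, rfl⟩ := hb
    exact (DD_wk r.1 r.2 (ih a ha d hd)).recast (by simp [sadd]; abel) (by simp [sadd]; abel)
  | @ctrL φ Γ Δ _ ih =>
    intro a ha b hb
    rw [MDec_cons] at ha
    obtain ⟨l, hl, d, hd, rfl⟩ := ha
    have hm : sadd l (sadd l d) ∈ MDec false (φ ::ₘ φ ::ₘ Γ) := by
      rw [MDec_cons]
      exact ⟨l, hl, sadd l d, by rw [MDec_cons]; exact ⟨l, hl, d, hd, rfl⟩, rfl⟩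
    have h1 : DD S (l.1 + l.1 + (d.1 + b.1), l.2 + l.2 + (d.2 + b.2)) :=
      (ih _ hm b hb).recast (by simp [sadd]; abel) (by simp [sadd]; abel)
    exact (DD_ctr h1).recast (by simp [sadd]; abel) (by simp [sadd]; abel)
  | @ctrR φ Γ Δ _ ih =>
    intro a ha b hb
    rw [MDec_cons] at hb
    obtain ⟨r, hr, d, hd, rfl⟩ := hb
    have hm : sadd r (sadd r d) ∈ MDec true (φ ::ₘ φ ::ₘ Δ) := by
      rw [MDec_cons]
      exact ⟨r, hr, sadd r d, by rw [MDec_cons]; exact ⟨r, hr, d, hd, rfl⟩, rfl⟩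
    have h1 : DD S (r.1 + r.1 + (a.1 + d.1), r.2 + r.2 + (a.2 + d.2)) :=
      (ih a ha _ hm).recast (by simp [sadd]; abel) (by simp [sadd]; abel)
    exact (DD_ctr h1).recast (by simp [sadd]; abel) (by simp [sadd]; abel)
  | @andR φ ψ Γ Δ _ _ _ ih1 ih2 =>
    intro a ha b hb
    rw [MDec_cons] at hb
    obtain ⟨r, hr, d, hd, rfl⟩ := hb
    rcases hr with hr | hr
    · exact ih1 a ha (sadd r d) (by rw [MDec_cons]; exact ⟨r, hr, d, hd, rfl⟩)
    · exact ih2 a ha (sadd r d) (by rw [MDec_cons]; exact ⟨r, hr, d, hd, rfl⟩)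
  | @andL φ ψ Γ Δ _ _ ih =>
    intro a ha b hb
    rw [MDec_cons] at ha
    obtain ⟨l, hl, d, hd, rfl⟩ := ha
    obtain ⟨l1, hl1, l2, hl2, rfl⟩ := hl
    have hm : sadd l1 (sadd l2 d) ∈ MDec false (φ ::ₘ ψ ::ₘ Γ) := by
      rw [MDec_cons]
      exact ⟨l1, hl1, sadd l2 d, by rw [MDec_cons]; exact ⟨l2, hl2, d, hd, rfl⟩, rfl⟩
    exact (ih _ hm b hb).recast (by simp [sadd]; abel) (by simp [sadd]; abel)
  | @orL φ ψ Γ Δ _ _ _ ih1 ih2 =>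
    intro a ha b hb
    rw [MDec_cons] at ha
    obtain ⟨l, hl, d, hd, rfl⟩ := ha
    rcases hl with hl | hl
    · exact ih1 (sadd l d) (by rw [MDec_cons]; exact ⟨l, hl, d, hd, rfl⟩) b hb
    · exact ih2 (sadd l d) (by rw [MDec_cons]; exact ⟨l, hl, d, hd, rfl⟩) b hb
  | @orR φ ψ Γ Δ _ _ ih =>
    intro a ha b hb
    rw [MDec_cons] at hb
    obtain ⟨r, hr, d, hd, rfl⟩ := hb
    obtain ⟨r1, hr1, r2, hr2, rfl⟩ := hr
    have hm : sadd r1 (sadd r2 d) ∈ MDec true (φ ::ₘ ψ ::ₘ Δ) := by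
      rw [MDec_cons]
      exact ⟨r1, hr1, sadd r2 d, by rw [MDec_cons]; exact ⟨r2, hr2, d, hd, rfl⟩, rfl⟩
    exact (ih a ha _ hm).recast (by simp [sadd]; abel) (by simp [sadd]; abel)
  | @negR φ Γ Δ _ _ ih =>
    intro a ha b hb
    rw [MDec_cons] at hb
    obtain ⟨r, hr, d, hd, rfl⟩ := hb
    rw [RL_neg] at hr
    have hm : sadd r a ∈ MDec false (φ ::ₘ Γ) := by
      rw [MDec_cons]; exact ⟨r, hr, a, ha, rfl⟩
    exact (ih _ hm d hd).recast (by simp [sadd]; abel) (by simp [sadd]; abel)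
  | @negL φ Γ Δ _ _ ih =>
    intro a ha b hb
    rw [MDec_cons] at ha
    obtain ⟨l, hl, d, hd, rfl⟩ := ha
    rw [RL_neg] at hl
    have hm : sadd l b ∈ MDec true (φ ::ₘ Δ) := by
      rw [MDec_cons]; exact ⟨l, hl, b, hb, rfl⟩
    exact (ih d hd _ hm).recast (by simp [sadd]; abel) (by simp [sadd]; abel)
  | topR =>
    intro a ha b hb
    rw [MDec_zero] at ha
    rcases ha with rfl
    rw [show ({Fm.top} : Multiset Fm) = Fm.top ::ₘ 0 from rfl, MDec_cons] at hb
    obtain ⟨r, hr, d, hd, rfl⟩ := hb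
    rcases hr with rfl
    rw [MDec_zero] at hd
    rcases hd with rfl
    exact Or.inr (Or.inr (by simp [sadd]))
  | botL =>
    intro a ha b hb
    rw [MDec_zero] at hb
    rcases hb with rfl
    rw [show ({Fm.bot} : Multiset Fm) = Fm.bot ::ₘ 0 from rfl, MDec_cons] at ha
    obtain ⟨l, hl, d, hd, rfl⟩ := ha
    rcases hl with rfl
    rw [MDec_zero] at hd
    rcases hd with rfl
    exact Or.inr (Or.inl (by simp [sadd]))
  | @andRE1 φ ψ Γ Δ _ _ ih =>
    intro a ha b hb
    rw [MDec_cons] at hb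
    obtain ⟨r, hr, d, hd, rfl⟩ := hb
    exact ih a ha (sadd r d) (by rw [MDec_cons]; exact ⟨r, Or.inl hr, d, hd, rfl⟩)
  | @andRE2 φ ψ Γ Δ _ _ ih =>
    intro a ha b hb
    rw [MDec_cons] at hb
    obtain ⟨r, hr, d, hd, rfl⟩ := hb
    exact ih a ha (sadd r d) (by rw [MDec_cons]; exact ⟨r, Or.inr hr, d, hd, rfl⟩)
  | @andLE φ ψ Γ Δ _ _ ih =>
    intro a ha b hb
    rw [MDec_cons] at ha
    obtain ⟨l1, hl1, d', hd', rfl⟩ := ha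
    rw [MDec_cons] at hd'
    obtain ⟨l2, hl2, d, hd, rfl⟩ := hd'
    have hm : sadd (sadd l1 l2) d ∈ MDec false (Fm.conj φ ψ ::ₘ Γ) := by
      rw [MDec_cons]; exact ⟨sadd l1 l2, ⟨l1, hl1, l2, hl2, rfl⟩, d, hd, rfl⟩
    exact (ih _ hm b hb).recast (by simp [sadd]; abel) (by simp [sadd]; abel)
  | @orLE1 φ ψ Γ Δ _ _ ih =>
    intro a ha b hb
    rw [MDec_cons] at ha
    obtain ⟨l, hl, d, hd, rfl⟩ := ha
    exact ih (sadd l d) (by rw [MDec_cons]; exact ⟨l, Or.inl hl, d, hd, rfl⟩) b hb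
  | @orLE2 φ ψ Γ Δ _ _ ih =>
    intro a ha b hb
    rw [MDec_cons] at ha
    obtain ⟨l, hl, d, hd, rfl⟩ := ha
    exact ih (sadd l d) (by rw [MDec_cons]; exact ⟨l, Or.inr hl, d, hd, rfl⟩) b hb
  | @orRE φ ψ Γ Δ _ _ ih =>
    intro a ha b hb
    rw [MDec_cons] at hb
    obtain ⟨r1, hr1, d', hd', rfl⟩ := hb
    rw [MDec_cons] at hd'
    obtain ⟨r2, hr2, d, hd, rfl⟩ := hd'
    have hm : sadd (sadd r1 r2) d ∈ MDec true (Fm.disj φ ψ ::ₘ Δ) := by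
      rw [MDec_cons]; exact ⟨sadd r1 r2, ⟨r1, hr1, r2, hr2, rfl⟩, d, hd, rfl⟩
    exact (ih a ha _ hm).recast (by simp [sadd]; abel) (by simp [sadd]; abel)
  | @negRE φ Γ Δ _ _ ih =>
    intro a ha b hb
    rw [MDec_cons] at ha
    obtain ⟨l, hl, d, hd, rfl⟩ := ha
    have hm : sadd l b ∈ MDec true (Fm.neg φ ::ₘ Δ) := by
      rw [MDec_cons]; exact ⟨l, by rw [RL_neg]; exact hl, b, hb, rfl⟩
    exact (ih d hd _ hm).recast (by simp [sadd]; abel) (by simp [sadd]; abel)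
  | @negLE φ Γ Δ _ _ ih =>
    intro a ha b hb
    rw [MDec_cons] at hb
    obtain ⟨r, hr, d, hd, rfl⟩ := hb
    have hm : sadd r a ∈ MDec false (Fm.neg φ ::ₘ Γ) := by
      rw [MDec_cons]; exact ⟨r, by rw [RL_neg]; exact hr, a, ha, rfl⟩
    exact (ih _ hm d hd).recast (by simp [sadd]; abel) (by simp [sadd]; abel)
  | @topLE Γ Δ _ _ ih =>
    intro a ha b hb
    have hm : sadd (0, 0) a ∈ MDec false (Fm.top ::ₘ Γ) := by
      rw [MDec_cons]; exact ⟨(0, 0), rfl, a, ha, rfl⟩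
    exact (ih _ hm b hb).recast (by simp [sadd]) (by simp [sadd])
  | @botRE Γ Δ _ _ ih =>
    intro a ha b hb
    have hm : sadd (0, 0) b ∈ MDec true (Fm.bot ::ₘ Δ) := by
      rw [MDec_cons]; exact ⟨(0, 0), rfl, b, hb, rfl⟩
    exact (ih a ha _ hm).recast (by simp [sadd]) (by simp [sadd])
  | ident _ hd => exact hd.elim
  | @cut φ Γ Γ' Δ Δ' _ _ _ ih1 ih2 =>
    intro a ha b hb
    obtain ⟨a1, ha1, a2, ha2, rfl⟩ := MDec_add false Γ Γ' a ha
    obtain ⟨b1, hb1, b2, hb2, rfl⟩ := MDec_add true Δ Δ' b hb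
    have key := cutLem (S := S) φ (a1.1 + b1.1) (a1.2 + b1.2) (a2.1 + b2.1) (a2.2 + b2.2)
      (fun r hr => (ih1 a1 ha1 (sadd r b1)
        (by rw [MDec_cons]; exact ⟨r, hr, b1, hb1, rfl⟩)).recast
        (by simp [sadd]; abel) (by simp [sadd]; abel))
      (fun l hl => (ih2 (sadd l a2)
        (by rw [MDec_cons]; exact ⟨l, hl, a2, ha2, rfl⟩) b2 hb2).recast
        (by simp [sadd]; abel) (by simp [sadd]; abel))
    exact key.recast (by simp [sadd]; abel) (by simp [sadd]; abel)
  | lcut1 hl _ _ => exact hl.elim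
  | lcut2 hl _ _ => exact hl.elim

lemma mono {s : Sqnt} (h : Drv False True False True False S s) :
    Drv True True False True False S s := by
  induction h with
  | prem h => exact .prem h
  | wkL φ _ ih => exact .wkL φ ih
  | wkR φ _ ih => exact .wkR φ ih
  | ctrL _ ih => exact .ctrL ih
  | ctrR _ ih => exact .ctrR ih
  | andR hi _ _ => exact hi.elim
  | andL hi _ => exact hi.elim
  | orL hi _ _ => exact hi.elim
  | orR hi _ => exact hi.elim
  | negR hi _ => exact hi.elim
  | negL hi _ => exact hi.elim
  | topR hi => exact hi.elim
  | botL hi => exact hi.elim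
  | andRE1 _ _ ih => exact .andRE1 trivial ih
  | andRE2 _ _ ih => exact .andRE2 trivial ih
  | andLE _ _ ih => exact .andLE trivial ih
  | orLE1 _ _ ih => exact .orLE1 trivial ih
  | orLE2 _ _ ih => exact .orLE2 trivial ih
  | orRE _ _ ih => exact .orRE trivial ih
  | negRE _ _ ih => exact .negRE trivial ih
  | negLE _ _ ih => exact .negLE trivial ih
  | topLE _ _ ih => exact .topLE trivial ih
  | botRE _ _ ih => exact .botRE trivial ih
  | ident _ hd => exact hd.elim
  | cut _ _ _ ih1 ih2 => exact .cut trivial ih1 ih2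
  | lcut1 hl _ _ => exact hl.elim
  | lcut2 hl _ _ => exact hl.elim

end Anti4


/-- Antiadmissibility of the introduction rules: in the calculus consisting of the common
structural rules, Cut, and all elimination rules, adding the introduction rules yields no
new derivations of the empty sequent from any set of premises. -/
theorem stmt6 (S : Set Sqnt) :
    Drv True True False True False S ((0 : Multiset Fm), (0 : Multiset Fm)) ↔
    Drv False True False True False S ((0 : Multiset Fm), (0 : Multiset Fm)) := by
  constructor
  · intro h
    have := mainGood h (0, 0) (by rw [MDec_zero]; rfl) (0, 0) (by rw [MDec_zero]; rfl)
    rcases this with h' | h' | h'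
    · exact h'.recast (by simp) (by simp)
    · simp at h'
    · simp at h'
  · exact mono
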